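/- For any two square-integrable real random variables X₁ ~ F₁ and X₂ ~ F₂ with given marginal distributions, E(X₁X₂) ≤ E(F₁⁻¹(U)F₂⁻¹(U)) where U is uniform on [0,1], i.e., the comonotonic coupling maximizes the expected product in dimension 2. -/

import Mathlib

open MeasureTheory Set

/-- Generalized inverse (quantile function) of a distribution on ℝ:
`F⁻¹(u) = inf {x : F(x) ≥ u}`. -/
noncomputable def quantile (ν : Measure ℝ) (u : ℝ) : ℝ :=
  sInf {x : ℝ | u ≤ (ν (Iic x)).toReal}

/-!
Writing `x = ∫ (1{s < x} - 1{s < 0}) ds` for both factors and applying Fubini turns `E[X₁X₂]` into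
an integral over `(s, t) ∈ ℝ²` whose integrand is the joint survival probability
`P(X₁ > s, X₂ > t)` plus terms that only involve the marginals. The joint survival probability
is at most `min (P(X₁ > s)) (P(X₂ > t))`, and the comonotone coupling `u ↦ (F₁⁻¹(u), F₂⁻¹(u))`
under Lebesgue measure on `(0, 1)` attains this bound, because `s < F⁻¹(u) ↔ F(s) < u`.
-/

open ProbabilityTheory

noncomputable def signedLayer (x s : ℝ) : ℝ :=
  (Iio x).indicator 1 s - (Iio 0).indicator 1 s

lemma signedLayer_of_nonneg {x : ℝ} (hx : 0 ≤ x) : signedLayer x = (Ico 0 x).indicator 1 := by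
  ext s
  simp only [signedLayer, indicator_apply, mem_Iio, mem_Ico, Pi.one_apply]
  split_ifs <;> grind

lemma signedLayer_of_nonpos {x : ℝ} (hx : x ≤ 0) :
    signedLayer x = -(Ico x 0).indicator 1 := by
  ext s
  simp only [signedLayer, indicator_apply, mem_Iio, mem_Ico, Pi.one_apply, Pi.neg_apply]
  split_ifs <;> grind

lemma measurable_signedLayer : Measurable fun q : ℝ × ℝ => signedLayer q.1 q.2 :=
  (measurable_one.indicator (measurableSet_lt measurable_snd measurable_fst)).sub
    ((measurable_one.indicator measurableSet_Iio).comp measurable_snd)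

lemma integrable_indicator_one_Ico (a b : ℝ) : Integrable ((Ico a b).indicator (1 : ℝ → ℝ)) :=
  (integrableOn_const (by simp)).integrable_indicator measurableSet_Ico

lemma integrable_signedLayer (x : ℝ) : Integrable (signedLayer x) := by
  rcases le_total 0 x with hx | hx
  · rw [signedLayer_of_nonneg hx]
    exact integrable_indicator_one_Ico 0 x
  · rw [signedLayer_of_nonpos hx]
    exact (integrable_indicator_one_Ico x 0).neg

lemma integral_signedLayer (x : ℝ) : ∫ s, signedLayer x s = x := by
  rcases le_total 0 x with hx | hx
  · rw [signedLayer_of_nonneg hx, integral_indicator_one measurableSet_Ico]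
    simp [hx]
  · rw [signedLayer_of_nonpos hx, integral_neg', integral_indicator_one measurableSet_Ico]
    simp [hx]

lemma integral_abs_signedLayer (x : ℝ) : ∫ s, |signedLayer x s| = |x| := by
  have abs_ind (a b s : ℝ) : |(Ico a b).indicator (1 : ℝ → ℝ) s| = (Ico a b).indicator 1 s :=
    abs_of_nonneg (indicator_nonneg (fun _ _ => zero_le_one) s)
  rcases le_total 0 x with hx | hx
  · simp_rw [signedLayer_of_nonneg hx, abs_ind]
    rw [integral_indicator_one measurableSet_Ico]
    simp [hx, abs_of_nonneg]
  · simp_rw [signedLayer_of_nonpos hx, Pi.neg_apply, abs_neg, abs_ind]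
    rw [integral_indicator_one measurableSet_Ico]
    simp [hx, abs_of_nonpos]

lemma integral_signedLayer_mul_signedLayer (x y : ℝ) :
    ∫ z : ℝ × ℝ, signedLayer x z.1 * signedLayer y z.2 = x * y := by
  rw [Measure.volume_eq_prod, integral_prod_mul, integral_signedLayer, integral_signedLayer]

lemma integral_norm_signedLayer_mul_signedLayer (x y : ℝ) :
    ∫ z : ℝ × ℝ, ‖signedLayer x z.1 * signedLayer y z.2‖ = ‖x * y‖ := by
  simp_rw [norm_mul, Real.norm_eq_abs]
  rw [Measure.volume_eq_prod, integral_prod_mul (f := fun s => |signedLayer x s|)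
    (g := fun t => |signedLayer y t|), integral_abs_signedLayer, integral_abs_signedLayer]

section Layers

variable (π : Measure (ℝ × ℝ))

lemma integrable_signedLayer_mul_signedLayer [SFinite π]
    (hπ : Integrable (fun p : ℝ × ℝ => p.1 * p.2) π) :
    Integrable (fun q : (ℝ × ℝ) × (ℝ × ℝ) => signedLayer q.1.1 q.2.1 * signedLayer q.1.2 q.2.2)
      (π.prod volume) := by
  refine (integrable_prod_iff ?_).2 ⟨ae_of_all _ fun p => ?_, ?_⟩
  · exact ((measurable_signedLayer.comp (measurable_fst.fst.prodMk measurable_snd.fst)).mul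
      (measurable_signedLayer.comp (measurable_fst.snd.prodMk measurable_snd.snd))).aestronglyMeasurable
  · rw [Measure.volume_eq_prod]
    exact (integrable_signedLayer p.1).mul_prod (integrable_signedLayer p.2)
  · simpa only [integral_norm_signedLayer_mul_signedLayer] using hπ.norm

theorem integral_fst_mul_snd_eq_integral_layers [SFinite π]
    (hπ : Integrable (fun p : ℝ × ℝ => p.1 * p.2) π) :
    Integrable (fun z : ℝ × ℝ => ∫ p, signedLayer p.1 z.1 * signedLayer p.2 z.2 ∂π) ∧
      ∫ p, p.1 * p.2 ∂π = ∫ z : ℝ × ℝ, ∫ p, signedLayer p.1 z.1 * signedLayer p.2 z.2 ∂π := by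
  have hΨ := integrable_signedLayer_mul_signedLayer π hπ
  refine ⟨hΨ.integral_prod_right, ?_⟩
  calc ∫ p, p.1 * p.2 ∂π
      = ∫ p : ℝ × ℝ, (∫ z : ℝ × ℝ, signedLayer p.1 z.1 * signedLayer p.2 z.2) ∂π := by
        simp only [integral_signedLayer_mul_signedLayer]
    _ = _ := integral_integral_swap hΨ

lemma integral_signedLayer_mul_signedLayer_eq [IsFiniteMeasure π] (s t : ℝ) :
    ∫ p, signedLayer p.1 s * signedLayer p.2 t ∂π =
      π.real (Ioi s ×ˢ Ioi t) - (Iio 0).indicator 1 t * (π.map Prod.fst).real (Ioi s)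
        - (Iio 0).indicator 1 s * (π.map Prod.snd).real (Ioi t)
        + (Iio 0).indicator 1 s * (Iio 0).indicator 1 t * π.real univ := by
  set S : Set (ℝ × ℝ) := Prod.fst ⁻¹' Ioi s
  set T : Set (ℝ × ℝ) := Prod.snd ⁻¹' Ioi t
  set c := (Iio 0).indicator (1 : ℝ → ℝ) s
  set d := (Iio 0).indicator (1 : ℝ → ℝ) t
  have hS : MeasurableSet S := measurable_fst measurableSet_Ioi
  have hT : MeasurableSet T := measurable_snd measurableSet_Ioi
  have hST : Integrable ((S ∩ T).indicator (1 : ℝ × ℝ → ℝ)) π :=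
    (integrable_const 1).indicator (hS.inter hT)
  have hS' : Integrable (fun p => d * S.indicator (1 : ℝ × ℝ → ℝ) p) π :=
    ((integrable_const 1).indicator hS).const_mul d
  have hT' : Integrable (fun p => c * T.indicator (1 : ℝ × ℝ → ℝ) p) π :=
    ((integrable_const 1).indicator hT).const_mul c
  have expand : ∀ p : ℝ × ℝ, signedLayer p.1 s * signedLayer p.2 t =
      (S ∩ T).indicator (1 : ℝ × ℝ → ℝ) p - d * S.indicator 1 p - c * T.indicator 1 p + c * d := by
    intro p
    simp only [signedLayer, S, T, c, d, indicator_apply, mem_Iio, Pi.one_apply]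
    split_ifs <;> simp_all
  simp_rw [expand]
  rw [integral_add, integral_sub, integral_sub, integral_const_mul, integral_const_mul,
    integral_const, integral_indicator_one (hS.inter hT), integral_indicator_one hS,
    integral_indicator_one hT, smul_eq_mul, ← prod_eq, map_measureReal_apply measurable_fst
    measurableSet_Ioi, map_measureReal_apply measurable_snd measurableSet_Ioi]
  · ring
  exacts [hST, hS', hST.sub hS', hT', (hST.sub hS').sub hT', integrable_const _]

end Layers

theorem integral_fst_mul_snd_le_of_joint_survival_le {π π' : Measure (ℝ × ℝ)}
    [IsFiniteMeasure π] [IsFiniteMeasure π']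
    (hπ : Integrable (fun p : ℝ × ℝ => p.1 * p.2) π)
    (hπ' : Integrable (fun p : ℝ × ℝ => p.1 * p.2) π')
    (hfst : π.map Prod.fst = π'.map Prod.fst) (hsnd : π.map Prod.snd = π'.map Prod.snd)
    (hle : ∀ s t, π.real (Ioi s ×ˢ Ioi t) ≤ π'.real (Ioi s ×ˢ Ioi t)) :
    ∫ p, p.1 * p.2 ∂π ≤ ∫ p, p.1 * p.2 ∂π' := by
  obtain ⟨hK, hπ_eq⟩ := integral_fst_mul_snd_eq_integral_layers π hπ
  obtain ⟨hK', hπ'_eq⟩ := integral_fst_mul_snd_eq_integral_layers π' hπ'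
  have huniv : π.real univ = π'.real univ := by
    simpa [map_measureReal_apply measurable_fst] using congrArg (fun m => m.real univ) hfst
  rw [hπ_eq, hπ'_eq]
  refine integral_mono hK hK' fun z => ?_
  simp only [integral_signedLayer_mul_signedLayer_eq, hfst, hsnd, huniv]
  linarith [hle z.1 z.2]

section Quantile

variable (ν : Measure ℝ) [IsProbabilityMeasure ν]

lemma quantile_eq_sInf_cdf (u : ℝ) : quantile ν u = sInf {x | u ≤ cdf ν x} := by
  simp only [quantile, cdf_eq_real, measureReal_def]

lemma quantile_le_iff {u x : ℝ} (h0 : 0 < u) (h1 : u < 1) :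
    quantile ν u ≤ x ↔ u ≤ cdf ν x := by
  rw [quantile_eq_sInf_cdf]
  set S := {x | u ≤ cdf ν x}
  have hS : S.Nonempty := ((tendsto_cdf_atTop ν).eventually_const_le h1).exists
  have hS_bdd : BddBelow S := by
    obtain ⟨b, hb⟩ := ((tendsto_cdf_atBot ν).eventually_lt_const h0).exists
    exact ⟨b, fun x hx => le_of_not_gt fun hxb => (hx.trans (monotone_cdf ν hxb.le)).not_gt hb⟩
  have hS_up : ∀ y > sInf S, u ≤ cdf ν y := fun y hy =>
    let ⟨x, hxS, hxy⟩ := exists_lt_of_csInf_lt hS hy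
    hxS.trans (monotone_cdf ν hxy.le)
  -- right continuity of the cdf puts the infimum itself into `S`
  have hS_inf : u ≤ cdf ν (sInf S) :=
    ge_of_tendsto (((cdf ν).right_continuous _).mono Ioi_subset_Ici_self)
      (eventually_nhdsWithin_of_forall hS_up)
  exact ⟨fun h => hS_inf.trans (monotone_cdf ν h), fun h => csInf_le hS_bdd h⟩

lemma lt_quantile_iff {u x : ℝ} (h0 : 0 < u) (h1 : u < 1) :
    x < quantile ν u ↔ cdf ν x < u := by
  simpa only [not_le] using (quantile_le_iff ν h0 h1).not

lemma monotoneOn_quantile : MonotoneOn (quantile ν) (Ioo 0 1) := fun _ hu _ hv huv =>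
  (quantile_le_iff ν hu.1 hu.2).2 <| huv.trans <| (quantile_le_iff ν hv.1 hv.2).1 le_rfl

lemma aemeasurable_quantile : AEMeasurable (quantile ν) (volume.restrict (Ioo 0 1)) :=
  aemeasurable_restrict_of_monotoneOn measurableSet_Ioo (monotoneOn_quantile ν)

lemma one_sub_cdf (x : ℝ) : 1 - cdf ν x = ν.real (Ioi x) := by
  rw [cdf_eq_real, ← compl_Iic, measureReal_compl measurableSet_Iic, probReal_univ]

lemma map_quantile : (volume.restrict (Ioo 0 1)).map (quantile ν) = ν := by
  refine Measure.ext_of_Iic _ _ fun x => ?_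
  have hset : quantile ν ⁻¹' Iic x ∩ Ioo 0 1 = Ioc 0 (cdf ν x) \ {1} := by
    ext u
    simp only [mem_inter_iff, mem_preimage, mem_Iic, mem_Ioo, mem_sdiff, mem_Ioc,
      mem_singleton_iff]
    constructor
    · rintro ⟨hq, h0, h1⟩
      exact ⟨⟨h0, (quantile_le_iff ν h0 h1).1 hq⟩, h1.ne⟩
    · rintro ⟨⟨h0, hu⟩, h1⟩
      have h1 : u < 1 := lt_of_le_of_ne (hu.trans (cdf_le_one ν x)) h1
      exact ⟨(quantile_le_iff ν h0 h1).2 hu, h0, h1⟩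
  rw [Measure.map_apply_of_aemeasurable (aemeasurable_quantile ν) measurableSet_Iic,
    Measure.restrict_apply' measurableSet_Ioo, hset, measure_sdiff_null Real.volume_singleton,
    Real.volume_Ioc, sub_zero, ofReal_cdf]

end Quantile

-- Only `Ioo 0 1` is used: at `0` and `1` the infimum defining `quantile` takes junk values.
noncomputable def comonotoneCoupling (ν₁ ν₂ : Measure ℝ) : Measure (ℝ × ℝ) :=
  (volume.restrict (Ioo 0 1)).map fun u => (quantile ν₁ u, quantile ν₂ u)

instance (ν₁ ν₂ : Measure ℝ) : IsFiniteMeasure (comonotoneCoupling ν₁ ν₂) := by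
  unfold comonotoneCoupling; infer_instance

section Coupling

variable (ν₁ ν₂ : Measure ℝ) [IsProbabilityMeasure ν₁] [IsProbabilityMeasure ν₂]

lemma aemeasurable_quantile_prod :
    AEMeasurable (fun u => (quantile ν₁ u, quantile ν₂ u)) (volume.restrict (Ioo 0 1)) :=
  (aemeasurable_quantile ν₁).prodMk (aemeasurable_quantile ν₂)

lemma map_fst_comonotoneCoupling : (comonotoneCoupling ν₁ ν₂).map Prod.fst = ν₁ := by
  rw [comonotoneCoupling, AEMeasurable.map_map_of_aemeasurable measurable_fst.aemeasurable
    (aemeasurable_quantile_prod ν₁ ν₂)]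
  exact map_quantile ν₁

lemma map_snd_comonotoneCoupling : (comonotoneCoupling ν₁ ν₂).map Prod.snd = ν₂ := by
  rw [comonotoneCoupling, AEMeasurable.map_map_of_aemeasurable measurable_snd.aemeasurable
    (aemeasurable_quantile_prod ν₁ ν₂)]
  exact map_quantile ν₂

lemma measureReal_comonotoneCoupling_Ioi_prod_Ioi (s t : ℝ) :
    (comonotoneCoupling ν₁ ν₂).real (Ioi s ×ˢ Ioi t) = min (ν₁.real (Ioi s)) (ν₂.real (Ioi t)) := by
  have hset : (fun u => (quantile ν₁ u, quantile ν₂ u)) ⁻¹' (Ioi s ×ˢ Ioi t) ∩ Ioo 0 1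
      = Ioo (max (cdf ν₁ s) (cdf ν₂ t)) 1 := by
    ext u
    simp only [mem_inter_iff, mem_preimage, mem_prod, mem_Ioi, mem_Ioo, max_lt_iff]
    constructor
    · rintro ⟨⟨hs, ht⟩, h0, h1⟩
      exact ⟨⟨(lt_quantile_iff ν₁ h0 h1).1 hs, (lt_quantile_iff ν₂ h0 h1).1 ht⟩, h1⟩
    · rintro ⟨⟨hs, ht⟩, h1⟩
      have h0 : 0 < u := (cdf_nonneg ν₁ s).trans_lt hs
      exact ⟨⟨(lt_quantile_iff ν₁ h0 h1).2 hs, (lt_quantile_iff ν₂ h0 h1).2 ht⟩, h0, h1⟩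
  rw [comonotoneCoupling, map_measureReal_apply_of_aemeasurable (aemeasurable_quantile_prod ν₁ ν₂)
    (measurableSet_Ioi.prod measurableSet_Ioi), measureReal_restrict_apply' measurableSet_Ioo,
    hset, Real.volume_real_Ioo_of_le (max_le (cdf_le_one ν₁ s) (cdf_le_one ν₂ t)),
    ← one_sub_cdf, ← one_sub_cdf, ← min_sub_sub_left]

lemma integral_comonotoneCoupling :
    ∫ p, p.1 * p.2 ∂(comonotoneCoupling ν₁ ν₂) = ∫ u in Ioo 0 1, quantile ν₁ u * quantile ν₂ u :=
  integral_map (aemeasurable_quantile_prod ν₁ ν₂) (by fun_prop)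

end Coupling

lemma integrable_fst_mul_snd {π : Measure (ℝ × ℝ)} (h₁ : MemLp id 2 (π.map Prod.fst))
    (h₂ : MemLp id 2 (π.map Prod.snd)) : Integrable (fun p : ℝ × ℝ => p.1 * p.2) π :=
  ((memLp_map_measure_iff aestronglyMeasurable_id measurable_fst.aemeasurable).1 h₁).integrable_mul
    ((memLp_map_measure_iff aestronglyMeasurable_id measurable_snd.aemeasurable).1 h₂)

lemma measureReal_Ioi_prod_Ioi_le_min {π : Measure (ℝ × ℝ)} [IsFiniteMeasure π]
    {ν₁ ν₂ : Measure ℝ} (h₁ : π.map Prod.fst = ν₁) (h₂ : π.map Prod.snd = ν₂) (s t : ℝ) :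
    π.real (Ioi s ×ˢ Ioi t) ≤ min (ν₁.real (Ioi s)) (ν₂.real (Ioi t)) := by
  rw [← h₁, ← h₂, map_measureReal_apply measurable_fst measurableSet_Ioi,
    map_measureReal_apply measurable_snd measurableSet_Ioi]
  exact le_min (measureReal_mono fun p hp => hp.1) (measureReal_mono fun p hp => hp.2)

theorem integral_fst_mul_snd_le_comonotoneCoupling {π : Measure (ℝ × ℝ)} [IsFiniteMeasure π]
    {ν₁ ν₂ : Measure ℝ} [IsProbabilityMeasure ν₁] [IsProbabilityMeasure ν₂]
    (h₁ : π.map Prod.fst = ν₁) (h₂ : π.map Prod.snd = ν₂) (hL₁ : MemLp id 2 ν₁)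
    (hL₂ : MemLp id 2 ν₂) :
    ∫ p, p.1 * p.2 ∂π ≤ ∫ p, p.1 * p.2 ∂(comonotoneCoupling ν₁ ν₂) := by
  have h₁' := map_fst_comonotoneCoupling ν₁ ν₂
  have h₂' := map_snd_comonotoneCoupling ν₁ ν₂
  refine integral_fst_mul_snd_le_of_joint_survival_le
    (integrable_fst_mul_snd (h₁ ▸ hL₁) (h₂ ▸ hL₂))
    (integrable_fst_mul_snd (h₁'.symm ▸ hL₁) (h₂'.symm ▸ hL₂))
    (h₁.trans h₁'.symm) (h₂.trans h₂'.symm) fun s t => ?_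
  rw [measureReal_comonotoneCoupling_Ioi_prod_Ioi]
  exact measureReal_Ioi_prod_Ioi_le_min h₁ h₂ s t

/-- The comonotonic coupling maximizes `E(X₁X₂)` among couplings with fixed marginals. -/
theorem stmt_0 {Ω : Type*} [MeasurableSpace Ω] (μ : Measure Ω) [IsProbabilityMeasure μ]
    (X₁ X₂ : Ω → ℝ) (F₁ F₂ : Measure ℝ)
    [IsProbabilityMeasure F₁] [IsProbabilityMeasure F₂]
    (hm₁ : Measurable X₁) (hm₂ : Measurable X₂)
    (hd₁ : μ.map X₁ = F₁) (hd₂ : μ.map X₂ = F₂)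
    (hL₁ : MemLp X₁ 2 μ) (hL₂ : MemLp X₂ 2 μ) :
    ∫ ω, X₁ ω * X₂ ω ∂μ ≤ ∫ u in Icc (0:ℝ) 1, quantile F₁ u * quantile F₂ u := by
  have hm : Measurable fun ω => (X₁ ω, X₂ ω) := hm₁.prodMk hm₂
  have hL₁' : MemLp id 2 F₁ :=
    hd₁ ▸ (memLp_map_measure_iff aestronglyMeasurable_id hm₁.aemeasurable).2 hL₁
  have hL₂' : MemLp id 2 F₂ :=
    hd₂ ▸ (memLp_map_measure_iff aestronglyMeasurable_id hm₂.aemeasurable).2 hL₂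
  calc ∫ ω, X₁ ω * X₂ ω ∂μ = ∫ p, p.1 * p.2 ∂(μ.map fun ω => (X₁ ω, X₂ ω)) :=
        (integral_map hm.aemeasurable (continuous_fst.mul continuous_snd).aestronglyMeasurable).symm
    _ ≤ ∫ p, p.1 * p.2 ∂(comonotoneCoupling F₁ F₂) :=
        integral_fst_mul_snd_le_comonotoneCoupling
          (by rw [Measure.map_map measurable_fst hm]; exact hd₁)
          (by rw [Measure.map_map measurable_snd hm]; exact hd₂) hL₁' hL₂'
    _ = ∫ u in Icc (0:ℝ) 1, quantile F₁ u * quantile F₂ u := by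
        rw [integral_comonotoneCoupling, integral_Icc_eq_integral_Ioo]
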